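/- arXiv:1704.03519 — 7 statements merged into one kernel-verified Lean document; each statement's English description precedes it below -/
import Mathlib

section
/- Let C ⊆ Rⁿ be a linear code over R and write C = η₁C₁ ⊕ η₂C₂ ⊕ η₃C₃ with C₁, C₂, C₃ linear codes over F_q. Then C ∩ C^⊥ = {0} if and only if Cᵢ ∩ Cᵢ^⊥ = {0} for each i = 1, 2, 3. -/
/-!
Write a word of `C` as `Σₖ ηₖ aₖ` with `aₖ ∈ Cₖ`. Because the `ηₖ` are orthogonal idempotents,
the inner product of two such words is `Σₖ ηₖ ⟨aₖ, bₖ⟩`, and because they are nonzero they are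
linearly independent over `F`. Hence a word lies in `C^⊥` exactly when each `aₖ ∈ Cₖ^⊥`, so
`C ∩ C^⊥ = η₁(C₁ ∩ C₁^⊥) ⊕ η₂(C₂ ∩ C₂^⊥) ⊕ η₃(C₃ ∩ C₃^⊥)`.
-/

open Polynomial

/-- The ring `R = F_q[v]/(v^3 - v)`. -/
noncomputable abbrev Rq (F : Type*) [Field F] : Type _ := AdjoinRoot (X ^ 3 - X : F[X])

/-- The image `v` of the indeterminate in `R = F_q[v]/(v^3 - v)`. -/
noncomputable abbrev vq (F : Type*) [Field F] : Rq F := AdjoinRoot.root _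

/-- The Euclidean dual of a code: `C^⊥ = {x | ∀ y ∈ C, Σ xᵢyᵢ = 0}`. -/
def dualCode {S : Type*} [CommRing S] {ι : Type*} [Fintype ι]
    (C : Submodule S (ι → S)) : Submodule S (ι → S) where
  carrier := {x | ∀ y ∈ C, ∑ i, x i * y i = 0}
  add_mem' := by
    intro a b ha hb y hy
    simp only [Set.mem_setOf_eq] at *
    simp [Pi.add_apply, add_mul, Finset.sum_add_distrib, ha y hy, hb y hy]
  zero_mem' := by intro y hy; simp
  smul_mem' := by
    intro c a ha y hy
    simp only [Set.mem_setOf_eq] at *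
    simp [Pi.smul_apply, smul_eq_mul, mul_assoc, ← Finset.mul_sum, ha y hy]

theorem Pi.single_apply_mem {R κ M : Type*} [Semiring R] [AddCommMonoid M] [Module R M]
    [DecidableEq κ] {D : κ → Submodule R M} {k : κ} {y : M} (hy : y ∈ D k) (l : κ) :
    (Pi.single k y : κ → M) l ∈ D l := by
  rcases eq_or_ne l k with rfl | hl
  · simpa
  · simp [Pi.single_eq_of_ne hl]

namespace OrthogonalIdempotents

section Semiring

variable {F S κ : Type*} [CommSemiring F] [CommSemiring S] [Algebra F S] [Fintype κ] {e : κ → S}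

theorem mul_linearCombination (he : OrthogonalIdempotents e) (k : κ) (t : κ → F) :
    e k * Fintype.linearCombination F e t = t k • e k := by
  classical
  simp_rw [Fintype.linearCombination_apply, Finset.mul_sum, mul_smul_comm, he.mul_eq, smul_ite,
    smul_zero, Finset.sum_ite_eq, if_pos (Finset.mem_univ _)]

theorem linearCombination_mul (he : OrthogonalIdempotents e) (s t : κ → F) :
    Fintype.linearCombination F e s * Fintype.linearCombination F e t =
      Fintype.linearCombination F e (s * t) := by
  simp_rw [Fintype.linearCombination_apply F e s, Finset.sum_mul, smul_mul_assoc,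
    he.mul_linearCombination, smul_smul, Fintype.linearCombination_apply, Pi.mul_apply]

end Semiring

variable {F S κ : Type*} [Field F] [CommRing S] [Algebra F S] [Fintype κ] {e : κ → S}

theorem injective_linearCombination (he : OrthogonalIdempotents e) (hne : ∀ k, e k ≠ 0) :
    Function.Injective (Fintype.linearCombination F e) := by
  refine (injective_iff_map_eq_zero _).2 fun t ht => funext fun k => ?_
  have hk : t k • e k = 0 := by rw [← he.mul_linearCombination, ht, mul_zero]
  exact (smul_eq_zero.1 hk).resolve_right (hne k)

end OrthogonalIdempotents

section Codes

variable {F S κ ι : Type*} [Field F] [CommRing S] [Algebra F S] [Fintype κ] [Fintype ι]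
  {e : κ → S}

theorem OrthogonalIdempotents.sum_mul_linearCombination (he : OrthogonalIdempotents e)
    (a b : κ → ι → F) :
    ∑ i, Fintype.linearCombination F e (fun k => a k i) *
        Fintype.linearCombination F e (fun k => b k i) =
      Fintype.linearCombination F e (fun k => ∑ i, a k i * b k i) := by
  simp_rw [he.linearCombination_mul, ← map_sum]
  congr 1
  ext k
  simp

variable {D : κ → Submodule F (ι → F)} {C : Submodule S (ι → S)}

theorem mem_dualCode_iff_forall_mem_dualCode (he : OrthogonalIdempotents e)
    (hinj : Function.Injective (Fintype.linearCombination F e))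
    (hC : ∀ x, x ∈ C ↔ ∃ a : κ → ι → F, (∀ k, a k ∈ D k) ∧
      x = fun i => Fintype.linearCombination F e (fun k => a k i))
    (a : κ → ι → F) :
    (fun i => Fintype.linearCombination F e (fun k => a k i)) ∈ dualCode C ↔
      ∀ k, a k ∈ dualCode (D k) := by
  constructor
  · intro ha k y hy
    classical
    have hsum := ha _ ((hC _).2 ⟨Pi.single k y, Pi.single_apply_mem hy, rfl⟩)
    rw [he.sum_mul_linearCombination, ← map_zero (Fintype.linearCombination F e),
      hinj.eq_iff] at hsum
    simpa using congrFun hsum k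
  · rintro ha y hy
    obtain ⟨b, hb, rfl⟩ := (hC y).1 hy
    rw [he.sum_mul_linearCombination, ← map_zero (Fintype.linearCombination F e)]
    exact congrArg _ (funext fun k => ha k (b k) (hb k))

theorem inf_dualCode_eq_bot_iff (he : OrthogonalIdempotents e) (hne : ∀ k, e k ≠ 0)
    (hC : ∀ x, x ∈ C ↔ ∃ a : κ → ι → F, (∀ k, a k ∈ D k) ∧
      x = fun i => Fintype.linearCombination F e (fun k => a k i)) :
    C ⊓ dualCode C = ⊥ ↔ ∀ k, D k ⊓ dualCode (D k) = ⊥ := by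
  have hinj := he.injective_linearCombination (F := F) hne
  simp only [Submodule.eq_bot_iff, Submodule.mem_inf]
  constructor
  · rintro h k y ⟨hy, hy'⟩
    classical
    have h0 := h _ ⟨(hC _).2 ⟨Pi.single k y, Pi.single_apply_mem hy, rfl⟩,
      (mem_dualCode_iff_forall_mem_dualCode he hinj hC _).2 (Pi.single_apply_mem hy')⟩
    ext i
    have hi := hinj ((congrFun h0 i).trans (map_zero _).symm)
    simpa using congrFun hi k
  · rintro h x ⟨hx, hx'⟩
    obtain ⟨a, ha, rfl⟩ := (hC x).1 hx
    rw [mem_dualCode_iff_forall_mem_dualCode he hinj hC] at hx'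
    have ha0 : a = 0 := funext fun k => h k _ ⟨ha k, hx' k⟩
    ext i
    simp only [ha0, Pi.zero_apply]
    exact map_zero _

end Codes

theorem orthogonalIdempotents_of_pow_three_eq_self {A : Type*} [CommRing A] {v w : A}
    (hv : v ^ 3 = v) (hw : w * 2 = 1) :
    OrthogonalIdempotents ![1 - v ^ 2, w * (v + v ^ 2), w * (v ^ 2 - v)] := by
  refine ⟨fun k => ?_, fun k l hkl => ?_⟩
  · fin_cases k <;> simp [IsIdempotentElem] <;> grind
  · fin_cases k <;> fin_cases l <;> simp_all <;> grind

section Eta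

variable (F : Type*) [Field F]

theorem vq_pow_three : vq F ^ 3 = vq F := by
  have h := AdjoinRoot.eval₂_root (X ^ 3 - X : F[X])
  simpa [sub_eq_zero] using h

noncomputable def Rq.eta : Fin 3 → Rq F :=
  ![1 - vq F ^ 2, algebraMap F (Rq F) 2⁻¹ * (vq F + vq F ^ 2),
    algebraMap F (Rq F) 2⁻¹ * (vq F ^ 2 - vq F)]

variable {F}

theorem Rq.orthogonalIdempotents_eta (h2 : (2 : F) ≠ 0) : OrthogonalIdempotents (Rq.eta F) :=
  orthogonalIdempotents_of_pow_three_eq_self (vq_pow_three F) <| by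
    rw [← map_ofNat (algebraMap F (Rq F)) 2, ← map_mul, inv_mul_cancel₀ h2, map_one]

theorem Rq.eta_ne_zero (h2 : (2 : F) ≠ 0) (k : Fin 3) : Rq.eta F k ≠ 0 := by
  intro hk
  have hev (r : F) (hr : r ^ 3 = r) := congrArg (AdjoinRoot.liftAlgHom _ (AlgHom.id F F) r
    (by simp [hr])) hk
  -- `η₁`, `η₂`, `η₃` evaluate to `1` at `v = 0`, `v = 1`, `v = -1` respectively.
  fin_cases k
  · simpa [Rq.eta, vq] using hev 0 (by norm_num)
  · simpa [Rq.eta, vq, one_add_one_eq_two, h2] using hev 1 (by norm_num)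
  · simpa [Rq.eta, vq, one_add_one_eq_two, h2] using hev (-1) (by norm_num)

theorem Rq.linearCombination_eta (t : Fin 3 → F) :
    Fintype.linearCombination F (Rq.eta F) t =
      (1 - vq F ^ 2) * algebraMap F (Rq F) (t 0) +
        (algebraMap F (Rq F) 2⁻¹ * (vq F + vq F ^ 2)) * algebraMap F (Rq F) (t 1) +
        (algebraMap F (Rq F) 2⁻¹ * (vq F ^ 2 - vq F)) * algebraMap F (Rq F) (t 2) := by
  simp only [Fintype.linearCombination_apply, Fin.sum_univ_three, Rq.eta, Algebra.smul_def,
    mul_comm (algebraMap F (Rq F) _)]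
  rfl

end Eta

theorem two_ne_zero_of_odd_card {F : Type*} [Field F] [Fintype F] (hodd : Odd (Fintype.card F)) :
    (2 : F) ≠ 0 :=
  Ring.two_ne_zero fun h => (Nat.not_even_iff_odd.2 hodd)
    (Nat.even_iff.2 (FiniteField.even_card_of_char_two h))

/-- Let `C = η₁C₁ ⊕ η₂C₂ ⊕ η₃C₃` be a linear code of length `n` over
`R = F_q[v]/(v^3 - v)`, with `C₁, C₂, C₃` linear codes over `F_q`.
Then `C ∩ C^⊥ = {0}` if and only if `Cᵢ ∩ Cᵢ^⊥ = {0}` for each `i = 1, 2, 3`. -/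
theorem stmt_5 (F : Type*) [Field F] [Fintype F] (hodd : Odd (Fintype.card F)) (n : ℕ)
    (C₁ C₂ C₃ : Submodule F (Fin n → F))
    (C : Submodule (Rq F) (Fin n → Rq F))
    (hC : ∀ x : Fin n → Rq F,
      x ∈ C ↔ ∃ a ∈ C₁, ∃ b ∈ C₂, ∃ c ∈ C₃,
        x = fun i =>
          (1 - vq F ^ 2) * algebraMap F (Rq F) (a i) +
            (algebraMap F (Rq F) 2⁻¹ * (vq F + vq F ^ 2)) * algebraMap F (Rq F) (b i) +
            (algebraMap F (Rq F) 2⁻¹ * (vq F ^ 2 - vq F)) * algebraMap F (Rq F) (c i))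
 :
    C ⊓ dualCode C = ⊥ ↔
      (C₁ ⊓ dualCode C₁ = ⊥ ∧ C₂ ⊓ dualCode C₂ = ⊥ ∧ C₃ ⊓ dualCode C₃ = ⊥) := by
  have h2 : (2 : F) ≠ 0 := two_ne_zero_of_odd_card hodd
  have hC' : ∀ x, x ∈ C ↔ ∃ a : Fin 3 → Fin n → F, (∀ k, a k ∈ ![C₁, C₂, C₃] k) ∧
      x = fun i => Fintype.linearCombination F (Rq.eta F) (fun k => a k i) := by
    intro x
    simp only [hC, Rq.linearCombination_eta]
    constructor
    · rintro ⟨a, ha, b, hb, c, hc, rfl⟩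
      exact ⟨![a, b, c], fun k => by fin_cases k <;> assumption, rfl⟩
    · rintro ⟨a, ha, rfl⟩
      exact ⟨a 0, ha 0, a 1, ha 1, a 2, ha 2, rfl⟩
  rw [inf_dualCode_eq_bot_iff (Rq.orthogonalIdempotents_eta h2) (Rq.eta_ne_zero h2) hC']
  simp [Fin.forall_fin_succ]
end

section
/- Let G be a k × n generator matrix of a linear code C over F_q (the rows of G span C and are linearly independent). Then C ∩ C^⊥ = {0} if and only if the k × k matrix G·Gᵗ is invertible. -/
open Polynomial

/-!
Every codeword of the row space `C` of `G` is `v G` for some `v`, and `v G` is orthogonal to all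
of `C` iff it is orthogonal to each row, i.e. iff `v (G Gᵀ) = 0`. Hence `C ∩ C^⊥` is the image of
the left kernel of `G Gᵀ` under `v ↦ v G`, which is injective because the rows are independent;
so `C ∩ C^⊥ = 0` iff `v ↦ v (G Gᵀ)` is injective, i.e. iff the square matrix `G Gᵀ` is invertible.
-/

open Matrix

section

variable {S : Type*} [CommRing S] {ι κ : Type*} [Fintype ι]

theorem mem_dualCode_iff_le_ker {C : Submodule S (ι → S)} {x : ι → S} :
    x ∈ dualCode C ↔ C ≤ LinearMap.ker (dotProductBilin S S x) :=
  Iff.rfl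

theorem mem_dualCode_span_iff (v : κ → ι → S) (x : ι → S) :
    x ∈ dualCode (Submodule.span S (Set.range v)) ↔ ∀ j, x ⬝ᵥ v j = 0 := by
  rw [mem_dualCode_iff_le_ker, Submodule.span_le, Set.range_subset_iff]
  rfl

end

namespace Matrix

variable {S : Type*} [CommRing S] {ι κ : Type*} [Fintype ι] [Fintype κ]

theorem vecMul_mul_transpose_apply (G : Matrix κ ι S) (v : κ → S) (j : κ) :
    (v ᵥ* (G * Gᵀ)) j = (v ᵥ* G) ⬝ᵥ G j := by
  rw [← vecMul_vecMul]
  rfl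

theorem vecMul_mem_dualCode_iff (G : Matrix κ ι S) (v : κ → S) :
    v ᵥ* G ∈ dualCode (Submodule.span S (Set.range G.row)) ↔ v ᵥ* (G * Gᵀ) = 0 := by
  simp only [mem_dualCode_span_iff, funext_iff, vecMul_mul_transpose_apply, Pi.zero_apply]
  rfl

theorem span_inf_dualCode_eq_map_ker (G : Matrix κ ι S) :
    Submodule.span S (Set.range G.row) ⊓ dualCode (Submodule.span S (Set.range G.row)) =
      (LinearMap.ker (G * Gᵀ).vecMulLinear).map G.vecMulLinear := by
  ext x
  rw [Submodule.mem_inf, Submodule.mem_map]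
  constructor
  · rintro ⟨hx, hdual⟩
    obtain ⟨v, rfl⟩ : x ∈ LinearMap.range G.vecMulLinear := (range_vecMulLinear G).symm ▸ hx
    exact ⟨v, (vecMul_mem_dualCode_iff G v).1 hdual, rfl⟩
  · rintro ⟨v, hv, rfl⟩
    exact ⟨range_vecMulLinear G ▸ LinearMap.mem_range_self _ v, (vecMul_mem_dualCode_iff G v).2 hv⟩

end Matrix

theorem stmt_8_general (F : Type*) [Field F] (n k : ℕ)
    (G : Matrix (Fin k) (Fin n) F)
    (hind : LinearIndependent F (fun i => G i)) :
    Submodule.span F (Set.range fun i => G i) ⊓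
        dualCode (Submodule.span F (Set.range fun i => G i)) = ⊥ ↔
      IsUnit (G * G.transpose) := by
  have hG : Function.Injective G.vecMulLinear := vecMul_injective_iff.2 hind
  rw [show (fun i => G i) = G.row from rfl, span_inf_dualCode_eq_map_ker,
    (Submodule.map_injective_of_injective hG).eq_iff' (Submodule.map_bot _), LinearMap.ker_eq_bot,
    coe_vecMulLinear, vecMul_injective_iff_isUnit]

/-- Massey's criterion: if `G` is a generator matrix of an `[n,k]` linear code `C`
over `F_q` (rows span `C` and are linearly independent), then `C ∩ C^⊥ = {0}` if and
only if the `k × k` matrix `G·Gᵗ` is nonsingular. -/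
theorem stmt_8 (F : Type*) [Field F] [Fintype F] (n k : ℕ)
    (G : Matrix (Fin k) (Fin n) F)
    (hind : LinearIndependent F (fun i => G i)) :
    Submodule.span F (Set.range fun i => G i) ⊓
        dualCode (Submodule.span F (Set.range fun i => G i)) = ⊥ ↔
      IsUnit (G * G.transpose) :=
  stmt_8_general F n k G hind
end

section
/- Let C be a cyclic code over F_q of length n with gcd(n, q) = 1, generated by a monic divisor f(x) of xⁿ - 1. Then C is LCD if and only if f(x) is self-reciprocal, i.e., f(x) = x^{deg f} · f(1/x) up to a unit scalar. -/
/-!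
Identify a word `x` with `∑ xᵢ Xⁱ` and write `f h = Xⁿ - 1`. For a codeword `y = f q` the inner
product `⟨x, y⟩` is the coefficient of `X^(n-1)` in `f q · X^(n-1) x(1/X)`, which equals
`∑ qᵢ [X^(deg f + i)] (f* x)`. So `x ∈ C^⊥` iff the coefficients of `f* x` in degrees
`deg f ≤ k < n` vanish; since `f* ∣ Xⁿ - 1` and `deg (f* x) < n + deg f`, this happens iff
`Xⁿ - 1 = -f* h*` divides `f* x`, i.e. iff `h* ∣ x`. Hence `C ∩ C^⊥` consists of the common
multiples of `f` and `h*` of degree `< n = deg f + deg h*`, and it is trivial iff `f` and `h*` are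
coprime. If `f* = c f`, coprimality follows from the separability of `f* h* = -(Xⁿ - 1)`, which is
where `gcd(n, q) = 1` enters; conversely, coprimality gives `f ∣ f*`, and since the degrees agree,
`f* = c f`.
-/

open Polynomial

open Finset

namespace Polynomial

section CommSemiring

variable {R : Type*} [CommSemiring R]

theorem coeff_mul_reflect (q u : R[X]) {N m : ℕ} (hm : m ≤ N) :
    (q * reflect N u).coeff m = ∑ i ∈ range (m + 1), q.coeff i * u.coeff (N - m + i) := by
  rw [coeff_mul, Nat.sum_antidiagonal_eq_sum_range_succ_mk]
  refine sum_congr rfl fun i hi => ?_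
  rw [coeff_reflect, revAt_le (by omega)]
  congr 2
  have := mem_range.mp hi
  omega

theorem mul_reflect_eq_reflect_reverse_mul (f b : R[X]) {N : ℕ} (hb : b.natDegree ≤ N) :
    f * reflect N b = reflect (f.natDegree + N) (f.reverse * b) := by
  rw [reflect_mul _ _ (reverse_natDegree_le f) hb, reverse, reflect_reflect]

theorem natDegree_reverse_of_coeff_zero_ne_zero {f : R[X]} (hf : f.coeff 0 ≠ 0) :
    f.reverse.natDegree = f.natDegree := by
  rw [reverse_natDegree, natTrailingDegree_eq_zero.mpr (Or.inr hf), Nat.sub_zero]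

end CommSemiring

section CommRing

variable {R : Type*} [CommRing R] [Nontrivial R]

theorem reverse_X_pow_sub_one (n : ℕ) : (X ^ n - 1 : R[X]).reverse = 1 - X ^ n := by
  rw [sub_eq_add_neg, ← C_1, ← C_neg, reverse_add_C, natDegree_X_pow, ← one_mul (X ^ n),
    reverse_mul_X_pow, reverse, natDegree_one, reflect_one, pow_zero, C_neg, C_1]
  ring

theorem coeff_zero_ne_zero_of_dvd_X_pow_sub_one {f : R[X]} {n : ℕ} (hn : 0 < n)
    (hf : f ∣ X ^ n - 1) : f.coeff 0 ≠ 0 := by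
  intro h0
  have := X_dvd_iff.mp ((X_dvd_iff.mpr h0).trans hf)
  simp [coeff_X_pow, hn.ne] at this

theorem reverse_mul_reverse_of_mul_eq_X_pow_sub_one [NoZeroDivisors R] {f h : R[X]} {n : ℕ}
    (hfh : f * h = X ^ n - 1) : f.reverse * h.reverse = -(X ^ n - 1) := by
  rw [← reverse_mul_of_domain, hfh, reverse_X_pow_sub_one, neg_sub]

end CommRing

section Field

variable {K : Type*} [Field K]

theorem X_pow_sub_one_dvd_iff_coeff_eq_zero {g u : K[X]} {n : ℕ} (hg0 : g ≠ 0)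
    (hg : g ∣ X ^ n - 1) (hgu : g ∣ u) (hu : u.natDegree < n + g.natDegree) :
    X ^ n - 1 ∣ u ↔ ∀ k, g.natDegree ≤ k → k < n → u.coeff k = 0 := by
  constructor
  · rintro ⟨D, rfl⟩ k hgk hkn
    rw [sub_mul, one_mul, coeff_sub, coeff_X_pow_mul', if_neg (by omega), zero_sub, neg_eq_zero]
    rcases eq_or_ne D 0 with rfl | hD0
    · exact coeff_zero k
    have hmonic : (X ^ n - 1 : K[X]).Monic := by
      simpa using monic_X_pow_sub_C (1 : K) (by omega : n ≠ 0)
    have hXn : (X ^ n - 1 : K[X]).natDegree = n := by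
      simpa using natDegree_X_pow_sub_C (n := n) (r := (1 : K))
    refine coeff_eq_zero_of_natDegree_lt ?_
    rw [hmonic.natDegree_mul' hD0, hXn] at hu
    omega
  · intro hmid
    -- split `u = A + Xⁿ D` with `deg A < n`; then `g` divides `A + D = u - (Xⁿ - 1) D`,
    -- whose coefficients all vanish from `deg g` on
    set A := u %ₘ X ^ n
    set D := u /ₘ X ^ n
    have hsplit : A + X ^ n * D = u := modByMonic_add_div u (X ^ n)
    have hA_high : ∀ k, n ≤ k → A.coeff k = 0 := by
      rw [← degree_lt_iff_coeff_zero, ← degree_X_pow (R := K)]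
      exact degree_modByMonic_lt u (monic_X_pow n)
    have hA_low : ∀ k, k < n → A.coeff k = u.coeff k := fun k hk => by
      rw [← hsplit, coeff_add, coeff_X_pow_mul', if_neg (by omega), add_zero]
    have hD : ∀ j, D.coeff j = u.coeff (n + j) := fun j => by
      rw [← hsplit, coeff_add, hA_high _ (Nat.le_add_right n j), coeff_X_pow_mul',
        if_pos (Nat.le_add_right n j), zero_add, Nat.add_sub_cancel_left]
    have hAD : A + D = 0 := by
      refine eq_zero_of_dvd_of_degree_lt (p := g) ?_ ?_
      · have : A + D = u - (X ^ n - 1) * D := by linear_combination hsplit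
        rw [this]
        exact dvd_sub hgu (hg.mul_right D)
      · rw [degree_eq_natDegree hg0, degree_lt_iff_coeff_zero]
        intro m hm
        rw [coeff_add, hD, coeff_eq_zero_of_natDegree_lt (p := u) (by omega), add_zero]
        rcases lt_or_ge m n with hmn | hmn
        · rw [hA_low m hmn, hmid m hm hmn]
        · exact hA_high m hmn
    exact ⟨D, by linear_combination hAD - hsplit⟩

theorem isCoprime_iff_eq_zero_of_dvd_of_dvd_of_natDegree_lt {f g : K[X]} (hf : f ≠ 0)
    (hg : g ≠ 0) :
    IsCoprime f g ↔
      ∀ a : K[X], a.natDegree < f.natDegree + g.natDegree → f ∣ a → g ∣ a → a = 0 := by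
  classical
  constructor
  · intro hfg a ha hfa hga
    by_contra ha0
    have := natDegree_le_of_dvd (hfg.mul_dvd hfa hga) ha0
    rw [natDegree_mul hf hg] at this
    omega
  · intro H
    rw [← EuclideanDomain.gcd_isUnit_iff]
    by_contra hgcd
    have hgcd0 : EuclideanDomain.gcd f g ≠ 0 := by
      rw [Ne, EuclideanDomain.gcd_eq_zero_iff]
      exact fun h => hf h.1
    have hlcm0 : EuclideanDomain.lcm f g ≠ 0 := by
      rw [Ne, EuclideanDomain.lcm_eq_zero_iff]
      exact fun h => h.elim hf hg
    have hgcd_pos : 0 < (EuclideanDomain.gcd f g).natDegree := by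
      rw [Nat.pos_iff_ne_zero]
      intro h0
      rw [isUnit_iff_degree_eq_zero, degree_eq_natDegree hgcd0, h0] at hgcd
      exact hgcd rfl
    have hdeg := congrArg natDegree (EuclideanDomain.gcd_mul_lcm f g)
    rw [natDegree_mul hgcd0 hlcm0, natDegree_mul hf hg] at hdeg
    exact hlcm0 (H _ (by omega) (EuclideanDomain.dvd_lcm_left f g)
      (EuclideanDomain.dvd_lcm_right f g))

theorem isCoprime_reverse_iff_exists_reverse_eq_C_mul {f h : K[X]} {n : ℕ}
    (hsep : (X ^ n - 1 : K[X]).Separable) (hf : f.Monic) (hfh : f * h = X ^ n - 1) :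
    IsCoprime f h.reverse ↔ ∃ c : K, IsUnit c ∧ f.reverse = C c * f := by
  have hrev := reverse_mul_reverse_of_mul_eq_X_pow_sub_one hfh
  constructor
  · intro hcop
    have hdvd : f ∣ f.reverse :=
      hcop.dvd_of_dvd_mul_right ⟨-h, by rw [hrev, ← hfh, mul_neg]⟩
    refine ⟨_, ?_, eq_leadingCoeff_mul_of_monic_of_dvd_of_natDegree_le hf hdvd
      (reverse_natDegree_le f)⟩
    simpa [isUnit_iff_ne_zero] using hf.ne_zero
  · rintro ⟨c, -, hfc⟩
    have : (C c * (f * h.reverse)).Separable := by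
      rw [← mul_assoc, ← hfc, hrev]
      exact (Associated.refl _).neg_right.separable hsep
    exact (this.of_mul_right).isCoprime

end Field

end Polynomial

theorem FiniteField.cast_ne_zero_of_coprime_card {F : Type*} [Field F] [Fintype F]
    {n : ℕ} (hco : n.Coprime (Fintype.card F)) : (n : F) ≠ 0 := by
  intro hn
  have hdvd := Nat.dvd_gcd ((ringChar.spec F n).mp hn)
    ((ringChar.spec F _).mp (FiniteField.cast_card_eq_zero F))
  rw [hco, Nat.dvd_one] at hdvd
  exact CharP.ringChar_ne_one hdvd

section CyclicCode

variable {K : Type*} [Field K] {n : ℕ}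

noncomputable def wordPoly (x : Fin n → K) : K[X] := ∑ i : Fin n, C (x i) * X ^ (i : ℕ)

theorem coeff_wordPoly (x : Fin n → K) (k : ℕ) :
    (wordPoly x).coeff k = if h : k < n then x ⟨k, h⟩ else 0 := by
  simp only [wordPoly, finsetSum_coeff, coeff_C_mul, coeff_X_pow]
  split_ifs with h
  · rw [sum_eq_single ⟨k, h⟩] <;> simp +contextual [Fin.ext_iff, eq_comm]
  · exact sum_eq_zero fun i _ => by simp [show k ≠ i by omega]

theorem natDegree_wordPoly_le (x : Fin n → K) : (wordPoly x).natDegree ≤ n - 1 := by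
  rw [natDegree_le_iff_coeff_eq_zero]
  intro k hk
  rw [coeff_wordPoly, dif_neg (by omega)]

theorem wordPoly_coeff {a : K[X]} (ha : a.natDegree < n) :
    wordPoly (fun i : Fin n => a.coeff i) = a := by
  ext k
  rw [coeff_wordPoly]
  split_ifs with hk
  · rfl
  · exact (coeff_eq_zero_of_natDegree_lt (by omega)).symm

theorem wordPoly_eq_zero_iff {x : Fin n → K} : wordPoly x = 0 ↔ x = 0 := by
  constructor
  · intro hx
    funext i
    simpa [hx] using (coeff_wordPoly x i).symm
  · rintro rfl
    simp [wordPoly]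

theorem sum_mul_eq_coeff_wordPoly_mul_reflect (hn : 0 < n) (x y : Fin n → K) :
    ∑ i, x i * y i = (wordPoly y * reflect (n - 1) (wordPoly x)).coeff (n - 1) := by
  rw [coeff_mul_reflect _ _ le_rfl, Nat.sub_add_cancel hn, ← Fin.sum_univ_eq_sum_range]
  refine sum_congr rfl fun i _ => ?_
  simp [coeff_wordPoly, mul_comm]

variable {S : Submodule K (Fin n → K)} {f : K[X]}

theorem mem_dualCode_iff_forall_coeff_mul_reflect (hS : ∀ y, y ∈ S ↔ f ∣ wordPoly y)
    (hn : 0 < n) (x : Fin n → K) :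
    x ∈ dualCode S ↔ ∀ q : K[X], (f * q).natDegree < n →
      (f * q * reflect (n - 1) (wordPoly x)).coeff (n - 1) = 0 := by
  constructor
  · intro hx q hq
    have hy := hx _ ((hS _).mpr (by rw [wordPoly_coeff hq]; exact dvd_mul_right f q))
    rwa [sum_mul_eq_coeff_wordPoly_mul_reflect hn, wordPoly_coeff hq] at hy
  · intro H y hy
    obtain ⟨q, hq⟩ := (hS y).mp hy
    rw [sum_mul_eq_coeff_wordPoly_mul_reflect hn, hq]
    exact H q (hq ▸ (natDegree_wordPoly_le y).trans_lt (by omega))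

theorem mem_dualCode_iff_coeff_reverse_mul_eq_zero (hS : ∀ y, y ∈ S ↔ f ∣ wordPoly y)
    (hn : 0 < n) (hf : f ≠ 0) (x : Fin n → K) :
    x ∈ dualCode S ↔
      ∀ k, f.natDegree ≤ k → k < n → (f.reverse * wordPoly x).coeff k = 0 := by
  set u := f.reverse * wordPoly x
  have hpair : ∀ q : K[X], (f * q * reflect (n - 1) (wordPoly x)).coeff (n - 1) =
      ∑ i ∈ range n, q.coeff i * u.coeff (f.natDegree + i) := fun q => by
    rw [mul_comm f q, mul_assoc, mul_reflect_eq_reflect_reverse_mul _ _ (natDegree_wordPoly_le x),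
      coeff_mul_reflect _ _ (by omega), Nat.sub_add_cancel hn, Nat.add_sub_cancel]
  simp only [mem_dualCode_iff_forall_coeff_mul_reflect hS hn, hpair]
  constructor
  · intro H k hk hkn
    have hX : (f * X ^ (k - f.natDegree)).natDegree < n := by
      rw [natDegree_mul hf (pow_ne_zero _ X_ne_zero), natDegree_X_pow]
      omega
    have hk' := H _ hX
    rwa [sum_eq_single_of_mem (k - f.natDegree) (mem_range.mpr (by omega))
      (fun i _ hi => by rw [coeff_X_pow, if_neg hi, zero_mul]), coeff_X_pow_self, one_mul,
      Nat.add_sub_cancel' hk] at hk'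
  · intro H q hq
    refine sum_eq_zero fun i _ => ?_
    rcases lt_or_ge (f.natDegree + i) n with hi | hi
    · rw [H _ (Nat.le_add_right _ _) hi, mul_zero]
    rcases eq_or_ne q 0 with rfl | hq0
    · rw [coeff_zero, zero_mul]
    rw [natDegree_mul hf hq0] at hq
    rw [coeff_eq_zero_of_natDegree_lt (by omega), zero_mul]

theorem mem_dualCode_iff_reverse_dvd (hS : ∀ y, y ∈ S ↔ f ∣ wordPoly y) (hn : 0 < n)
    {h : K[X]} (hfh : f * h = X ^ n - 1) (x : Fin n → K) :
    x ∈ dualCode S ↔ h.reverse ∣ wordPoly x := by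
  have hf0 : f.coeff 0 ≠ 0 := coeff_zero_ne_zero_of_dvd_X_pow_sub_one hn ⟨h, hfh.symm⟩
  have hf : f ≠ 0 := fun hf => hf0 (by rw [hf, coeff_zero])
  have hfrev : f.reverse ≠ 0 := by rwa [Ne, reverse_eq_zero]
  have hrev := reverse_mul_reverse_of_mul_eq_X_pow_sub_one hfh
  have hdeg : (f.reverse * wordPoly x).natDegree < n + f.reverse.natDegree := by
    have := natDegree_mul_le (p := f.reverse) (q := wordPoly x)
    have := natDegree_wordPoly_le x
    omega
  rw [mem_dualCode_iff_coeff_reverse_mul_eq_zero hS hn hf,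
    ← natDegree_reverse_of_coeff_zero_ne_zero hf0,
    ← X_pow_sub_one_dvd_iff_coeff_eq_zero hfrev ⟨-h.reverse, by rw [mul_neg, hrev, neg_neg]⟩
      (dvd_mul_right _ _) hdeg,
    ← neg_dvd, ← hrev, mul_dvd_mul_iff_left hfrev]

theorem inf_dualCode_eq_bot_iff_isCoprime (hS : ∀ y, y ∈ S ↔ f ∣ wordPoly y) (hn : 0 < n)
    {h : K[X]} (hfh : f * h = X ^ n - 1) :
    S ⊓ dualCode S = ⊥ ↔ IsCoprime f h.reverse := by
  have hfh0 : f * h ≠ 0 := by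
    rw [hfh]
    simpa using X_pow_sub_C_ne_zero hn (1 : K)
  have hf := left_ne_zero_of_mul hfh0
  have hh := right_ne_zero_of_mul hfh0
  have hh0 : h.coeff 0 ≠ 0 :=
    coeff_zero_ne_zero_of_dvd_X_pow_sub_one hn ⟨f, by rw [← hfh, mul_comm]⟩
  have hhrev : h.reverse ≠ 0 := by rwa [Ne, reverse_eq_zero]
  have hdeg : f.natDegree + h.reverse.natDegree = n := by
    rw [natDegree_reverse_of_coeff_zero_ne_zero hh0, ← natDegree_mul hf hh, hfh]
    simpa using natDegree_X_pow_sub_C (n := n) (r := (1 : K))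
  rw [isCoprime_iff_eq_zero_of_dvd_of_dvd_of_natDegree_lt hf hhrev, hdeg, Submodule.eq_bot_iff]
  constructor
  · intro H a ha hfa hha
    have hmem : (fun i : Fin n => a.coeff i) ∈ S ⊓ dualCode S := by
      rw [Submodule.mem_inf, hS, mem_dualCode_iff_reverse_dvd hS hn hfh, wordPoly_coeff ha]
      exact ⟨hfa, hha⟩
    rw [← wordPoly_coeff ha, H _ hmem, wordPoly_eq_zero_iff]
  · intro H x hx
    rw [Submodule.mem_inf, hS, mem_dualCode_iff_reverse_dvd hS hn hfh] at hx
    exact wordPoly_eq_zero_iff.mp (H _ ((natDegree_wordPoly_le x).trans_lt (by omega)) hx.1 hx.2)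

end CyclicCode

theorem stmt_9_general (F : Type*) [Field F] [Fintype F] (n : ℕ)
    (hco : Nat.Coprime n (Fintype.card F))
    (f : F[X]) (hmonic : f.Monic) (hdvd : f ∣ X ^ n - 1)
    (Cc : Submodule F (Fin n → F))
    (hCc : ∀ x : Fin n → F,
      x ∈ Cc ↔ f ∣ ∑ i : Fin n, Polynomial.C (x i) * X ^ (i : ℕ)) :
    Cc ⊓ dualCode Cc = ⊥ ↔ ∃ c : F, IsUnit c ∧ f.reverse = Polynomial.C c * f := by
  obtain ⟨h, hfh⟩ := hdvd
  have hnF : (n : F) ≠ 0 := FiniteField.cast_ne_zero_of_coprime_card hco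
  have hn : 0 < n := Nat.pos_of_ne_zero fun hn => hnF (by rw [hn, Nat.cast_zero])
  have hsep : (X ^ n - 1 : F[X]).Separable := by
    simpa using separable_X_pow_sub_C (1 : F) hnF one_ne_zero
  rw [inf_dualCode_eq_bot_iff_isCoprime hCc hn hfh.symm,
    isCoprime_reverse_iff_exists_reverse_eq_C_mul hsep hmonic hfh.symm]

/-- Let `C` be a cyclic code over `F_q` of length `n` with `gcd(n, q) = 1`, generated
by a monic divisor `f` of `Xⁿ - 1`. Then `C` is LCD if and only if `f` is
self-reciprocal (equal to its reciprocal up to a unit scalar). -/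
theorem stmt_9 (F : Type*) [Field F] [Fintype F] (n : ℕ) (hn : 0 < n)
    (hco : Nat.Coprime n (Fintype.card F))
    (f : F[X]) (hmonic : f.Monic) (hdvd : f ∣ X ^ n - 1)
    (Cc : Submodule F (Fin n → F))
    (hCc : ∀ x : Fin n → F,
      x ∈ Cc ↔ f ∣ ∑ i : Fin n, Polynomial.C (x i) * X ^ (i : ℕ)) :
    Cc ⊓ dualCode Cc = ⊥ ↔ ∃ c : F, IsUnit c ∧ f.reverse = Polynomial.C c * f :=
  stmt_9_general F n hco f hmonic hdvd Cc hCc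
end

section
/- Let W be an n × n matrix over F_q with entries in {0, 1, -1} satisfying W·Wᵗ = k·I_n (a weighing matrix of weight k), and let α ∈ F_q be nonzero with α² + k ≠ 0 in F_q. Then the n × 2n matrix G = [αI_n | W] generates an LCD [2n, n] code over F_q. -/
/-! The Gram matrix of `G = [αIₙ | W]` is `G Gᵀ = α² Iₙ + W Wᵀ = (α² + k) Iₙ`, which is invertible.
A codeword `a G` orthogonal to every row of `G` satisfies `a (G Gᵀ) = 0`, hence `a = 0`: the code
is LCD. Invertibility of `G Gᵀ` also forces `rank G = n`. -/

open Matrix Submodule Set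

theorem Fin.dotProduct_append {R : Type*} [NonUnitalNonAssocSemiring R] {m n : ℕ}
    (a c : Fin m → R) (b d : Fin n → R) :
    Fin.append a b ⬝ᵥ Fin.append c d = a ⬝ᵥ c + b ⬝ᵥ d := by
  simp [dotProduct, Fin.sum_univ_add]

namespace Matrix

variable {R ι κ : Type*}

theorem of_append_mul_transpose_self [CommSemiring R] {m n : ℕ}
    (A : Matrix ι (Fin m) R) (B : Matrix ι (Fin n) R) :
    of (fun i => Fin.append (A i) (B i)) * (of fun i => Fin.append (A i) (B i))ᵀ =
      A * Aᵀ + B * Bᵀ := by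
  ext i j
  exact Fin.dotProduct_append _ _ _ _

variable [Fintype ι] [Fintype κ] [DecidableEq ι]

theorem span_row_inf_dualCode_eq_bot [CommRing R] (M : Matrix ι κ R) (hM : IsUnit (M * Mᵀ)) :
    span R (range M.row) ⊓ dualCode (span R (range M.row)) = ⊥ := by
  rw [eq_bot_iff]
  rintro x ⟨hspan, hdual⟩
  rw [← range_vecMulLinear] at hspan
  obtain ⟨a, rfl⟩ := hspan
  have horth : a ᵥ* (M * Mᵀ) = 0 ᵥ* (M * Mᵀ) := by
    ext j
    rw [← vecMul_vecMul, vecMul_transpose, zero_vecMul, mulVec_apply, dotProduct_comm]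
    exact hdual (M j) (subset_span ⟨j, rfl⟩)
  rw [vecMul_injective_of_isUnit hM horth, vecMulLinear_apply, zero_vecMul]
  exact zero_mem _

theorem finrank_span_row_of_isUnit_mul_transpose [Field R] (M : Matrix ι κ R)
    (hM : IsUnit (M * Mᵀ)) : Module.finrank R (span R (range M.row)) = Fintype.card ι := by
  rw [← rank_eq_finrank_span_row]
  refine le_antisymm (rank_le_card_height M) ?_
  calc Fintype.card ι = (M * Mᵀ).rank := (rank_of_isUnit _ hM).symm
    _ ≤ M.rank := rank_mul_le_left _ _

end Matrix

theorem stmt_11_general (F : Type*) [Field F] (n k : ℕ)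
    (W : Matrix (Fin n) (Fin n) F)
    (hW : W * W.transpose = (k : F) • (1 : Matrix (Fin n) (Fin n) F))
    (α : F) (hαk : α ^ 2 + (k : F) ≠ 0) :
    let G : Fin n → (Fin (n + n) → F) :=
      fun i => Fin.append ((α • (1 : Matrix (Fin n) (Fin n) F)) i) (W i)
    Submodule.span F (Set.range G) ⊓ dualCode (Submodule.span F (Set.range G)) = ⊥ ∧
      Module.finrank F (Submodule.span F (Set.range G)) = n := by
  intro G
  have hgram : of G * (of G)ᵀ = (α ^ 2 + (k : F)) • 1 := by
    rw [of_append_mul_transpose_self, hW, transpose_smul, transpose_one, smul_mul_smul,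
      one_mul, add_smul, sq]
  have hunit : IsUnit (of G * (of G)ᵀ) := by
    rw [hgram]
    simpa using IsUnit.smul (Units.mk0 _ hαk) (isUnit_one (M := Matrix (Fin n) (Fin n) F))
  exact ⟨span_row_inf_dualCode_eq_bot (of G) hunit,
    (finrank_span_row_of_isUnit_mul_transpose (of G) hunit).trans (Fintype.card_fin n)⟩

/-- Let `W` be an `n × n` weighing matrix of weight `k` over `F_q` (entries in
`{0, 1, -1}`, `W·Wᵗ = k·Iₙ`) and `α ∈ F_q` nonzero with `α² + k ≠ 0`. Then
`G = [αIₙ | W]` generates an LCD `[2n, n]` code over `F_q`. -/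
theorem stmt_11 (F : Type*) [Field F] [Fintype F] (n k : ℕ)
    (W : Matrix (Fin n) (Fin n) F)
    (hent : ∀ i j, W i j = 0 ∨ W i j = 1 ∨ W i j = -1)
    (hW : W * W.transpose = (k : F) • (1 : Matrix (Fin n) (Fin n) F))
    (α : F) (hα : α ≠ 0) (hαk : α ^ 2 + (k : F) ≠ 0) :
    let G : Fin n → (Fin (n + n) → F) :=
      fun i => Fin.append ((α • (1 : Matrix (Fin n) (Fin n) F)) i) (W i)
    Submodule.span F (Set.range G) ⊓ dualCode (Submodule.span F (Set.range G)) = ⊥ ∧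
      Module.finrank F (Submodule.span F (Set.range G)) = n :=
  stmt_11_general F n k W hW α hαk
end

section
/- Let W be an n × n skew weighing matrix over F_q (W·Wᵗ = k·I_n and Wᵗ = -W), and α, β ∈ F_q nonzero with α² + β² + k ≠ 0 in F_q. Then G = [αI_n | βI_n + W] generates an LCD [2n, n] code over F_q. -/
namespace Matrix

section Gram

variable {R : Type*} [CommRing R] {m ι : Type*} [Fintype m] [DecidableEq m] [Fintype ι]
  {G : Matrix m ι R}

theorem linearIndependent_rows_of_isUnit_mul_transpose (hG : IsUnit (G * Gᵀ)) :
    LinearIndependent R G.row := by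
  rw [Fintype.linearIndependent_iff]
  intro c hc
  have hcG : c ᵥ* G = 0 := by rw [vecMul_eq_sum]; exact hc
  have hc0 : c ᵥ* (G * Gᵀ) = 0 ᵥ* (G * Gᵀ) := by
    rw [← vecMul_vecMul, hcG, zero_vecMul, zero_vecMul]
  exact congrFun (vecMul_injective_of_isUnit hG hc0)

theorem span_range_inf_dualCode_eq_bot_of_isUnit_mul_transpose (hG : IsUnit (G * Gᵀ)) :
    Submodule.span R (Set.range G.row) ⊓ dualCode (Submodule.span R (Set.range G.row)) = ⊥ := by
  rw [Submodule.eq_bot_iff]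
  rintro x ⟨hx, hx_dual⟩
  rw [← range_vecMulLinear] at hx
  obtain ⟨c, rfl⟩ := hx
  rw [vecMulLinear_apply] at hx_dual ⊢
  have h_orth : G *ᵥ (c ᵥ* G) = 0 := by
    funext j
    simpa only [mulVec, dotProduct, mul_comm, Pi.zero_apply] using
      hx_dual (G j) (Submodule.subset_span ⟨j, rfl⟩)
  have hc0 : c ᵥ* (G * Gᵀ) = 0 ᵥ* (G * Gᵀ) := by
    rw [← vecMul_vecMul, vecMul_transpose, h_orth, zero_vecMul]
  rw [vecMul_injective_of_isUnit hG hc0, zero_vecMul]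

end Gram

theorem of_append_mul_transpose {R : Type*} [CommRing R] {m : Type*} {n₁ n₂ : ℕ}
    (A : Matrix m (Fin n₁) R) (B : Matrix m (Fin n₂) R) :
    (of fun i => Fin.append (A i) (B i)) * (of fun i => Fin.append (A i) (B i))ᵀ =
      A * Aᵀ + B * Bᵀ := by
  ext i j
  simp [mul_apply, Fin.sum_univ_add]

theorem smul_one_add_mul_transpose_of_skew {R : Type*} [CommRing R] {n : Type*} [Fintype n]
    [DecidableEq n] {W : Matrix n n R} {k : R} (hW : W * Wᵀ = k • 1) (hskew : Wᵀ = -W)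
    (β : R) : (β • 1 + W) * (β • 1 + W)ᵀ = (β ^ 2 + k) • 1 := by
  rw [transpose_add, transpose_smul, transpose_one, add_mul, mul_add, mul_add, hW, hskew]
  simp only [mul_one, smul_one_mul, mul_neg, mul_smul_comm]
  rw [add_smul, sq, mul_smul]
  abel

end Matrix

open Matrix

theorem stmt_12_general (F : Type*) [Field F] (n k : ℕ)
    (W : Matrix (Fin n) (Fin n) F)
    (hW : W * W.transpose = (k : F) • (1 : Matrix (Fin n) (Fin n) F))
    (hskew : W.transpose = -W)
    (α β : F) (hαβk : α ^ 2 + β ^ 2 + (k : F) ≠ 0) :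
    let G : Fin n → (Fin (n + n) → F) :=
      fun i => Fin.append ((α • (1 : Matrix (Fin n) (Fin n) F)) i)
        ((β • (1 : Matrix (Fin n) (Fin n) F) + W) i)
    Submodule.span F (Set.range G) ⊓ dualCode (Submodule.span F (Set.range G)) = ⊥ ∧
      Module.finrank F (Submodule.span F (Set.range G)) = n := by
  intro G
  have h_gram : of G * (of G)ᵀ = (α ^ 2 + β ^ 2 + (k : F)) • (1 : Matrix (Fin n) (Fin n) F) := by
    rw [of_append_mul_transpose, smul_one_add_mul_transpose_of_skew hW hskew, transpose_smul,
      transpose_one, smul_mul_smul_comm, one_mul, ← add_smul]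
    congr 1
    ring
  have h_unit : IsUnit (of G * (of G)ᵀ) := by
    rw [h_gram, ← Algebra.algebraMap_eq_smul_one]
    exact hαβk.isUnit.map _
  refine ⟨span_range_inf_dualCode_eq_bot_of_isUnit_mul_transpose h_unit, ?_⟩
  exact (finrank_span_eq_card (linearIndependent_rows_of_isUnit_mul_transpose h_unit)).trans
    (Fintype.card_fin n)

/-- Let `W` be an `n × n` skew weighing matrix of weight `k` over `F_q`
(`W·Wᵗ = k·Iₙ`, `Wᵗ = -W`, entries in `{0, 1, -1}`) and `α, β ∈ F_q` nonzero with
`α² + β² + k ≠ 0`. Then `G = [αIₙ | βIₙ + W]` generates an LCD `[2n, n]` code. -/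
theorem stmt_12 (F : Type*) [Field F] [Fintype F] (n k : ℕ)
    (W : Matrix (Fin n) (Fin n) F)
    (hent : ∀ i j, W i j = 0 ∨ W i j = 1 ∨ W i j = -1)
    (hW : W * W.transpose = (k : F) • (1 : Matrix (Fin n) (Fin n) F))
    (hskew : W.transpose = -W)
    (α β : F) (hα : α ≠ 0) (hβ : β ≠ 0) (hαβk : α ^ 2 + β ^ 2 + (k : F) ≠ 0) :
    let G : Fin n → (Fin (n + n) → F) :=
      fun i => Fin.append ((α • (1 : Matrix (Fin n) (Fin n) F)) i)
        ((β • (1 : Matrix (Fin n) (Fin n) F) + W) i)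
    Submodule.span F (Set.range G) ⊓ dualCode (Submodule.span F (Set.range G)) = ⊥ ∧
      Module.finrank F (Submodule.span F (Set.range G)) = n :=
  stmt_12_general F n k W hW hskew α β hαβk
end

section
/- Let G = [I_k | P] be a generator matrix of a linear code over F_q with q ≡ 1 (mod 4), and let α ∈ F_q satisfy α² + 1 = 0. Then G' = [I_k | P | αP] generates an LCD code over F_q. -/
open Matrix

/-- A codeword `x = c ᵥ* G` orthogonal to every row of `G` satisfies `(G * Gᵀ) *ᵥ c = 0`. -/
theorem span_range_inf_dualCode_eq_bot {S : Type*} [CommRing S] {ι κ : Type*} [Fintype ι]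
    [DecidableEq ι] [Fintype κ] (G : Matrix ι κ S) (hG : IsUnit (G * Gᵀ)) :
    Submodule.span S (Set.range G.row) ⊓ dualCode (Submodule.span S (Set.range G.row)) = ⊥ := by
  rw [Submodule.eq_bot_iff]
  rintro x ⟨hx, hx_dual⟩
  rw [← range_vecMulLinear] at hx
  obtain ⟨c, rfl⟩ := hx
  have hc : (G * Gᵀ) *ᵥ c = 0 := by
    ext i
    rw [← mulVec_mulVec, mulVec_transpose]
    exact (dotProduct_comm _ _).trans (hx_dual (G i) (Submodule.subset_span ⟨i, rfl⟩))
  rw [mulVec_injective_of_isUnit hG (hc.trans (mulVec_zero _).symm)]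
  exact map_zero _

theorem dotProduct_append {R : Type*} [Mul R] [AddCommMonoid R] {m n : ℕ} (u u' : Fin m → R)
    (v v' : Fin n → R) :
    Fin.append u v ⬝ᵥ Fin.append u' v' = u ⬝ᵥ u' + v ⬝ᵥ v' := by
  simp [dotProduct, Fin.sum_univ_add]

theorem dotProduct_append_append_smul {R : Type*} [CommSemiring R] {m n : ℕ} (u u' : Fin m → R)
    (v v' : Fin n → R) (α : R) :
    Fin.append (Fin.append u v) (α • v) ⬝ᵥ Fin.append (Fin.append u' v') (α • v') =
      u ⬝ᵥ u' + (1 + α ^ 2) * (v ⬝ᵥ v') := by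
  rw [dotProduct_append, dotProduct_append, smul_dotProduct, dotProduct_smul, smul_eq_mul,
    smul_eq_mul]
  ring

theorem stmt_17_general (F : Type*) [Field F]
    (n k : ℕ) (α : F) (hα : α ^ 2 + 1 = 0) (P : Matrix (Fin k) (Fin n) F) :
    let G' : Fin k → (Fin (k + n + n) → F) :=
      fun i => Fin.append (Fin.append ((1 : Matrix (Fin k) (Fin k) F) i) (P i)) ((α • P) i)
    Submodule.span F (Set.range G') ⊓ dualCode (Submodule.span F (Set.range G')) = ⊥ := by
  intro G'
  have hgram : of G' * (of G')ᵀ = 1 := by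
    ext i j
    change G' i ⬝ᵥ G' j = (1 : Matrix (Fin k) (Fin k) F) i j
    refine (dotProduct_append_append_smul ((1 : Matrix (Fin k) (Fin k) F) i)
      ((1 : Matrix (Fin k) (Fin k) F) j) (P i) (P j) α).trans ?_
    rw [add_comm 1, hα, zero_mul, add_zero]
    simp [dotProduct, one_apply]
  exact span_range_inf_dualCode_eq_bot (of G') (hgram ▸ isUnit_one)

/-- Let `G = [I_k | P]` be a generator matrix of a linear code over `F_q` with
`q ≡ 1 (mod 4)`, and `α ∈ F_q` with `α² + 1 = 0`. Then `G' = [I_k | P | αP]`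
generates an LCD code over `F_q`. -/
theorem stmt_17 (F : Type*) [Field F] [Fintype F] (hq : Fintype.card F % 4 = 1)
    (n k : ℕ) (α : F) (hα : α ^ 2 + 1 = 0) (P : Matrix (Fin k) (Fin n) F) :
    let G' : Fin k → (Fin (k + n + n) → F) :=
      fun i => Fin.append (Fin.append ((1 : Matrix (Fin k) (Fin k) F) i) (P i)) ((α • P) i)
    Submodule.span F (Set.range G') ⊓ dualCode (Submodule.span F (Set.range G')) = ⊥ :=
  stmt_17_general F n k α hα P
end

section
/- Let M be an n × n λ-circulant matrix over a commutative ring S (row i+1 is the λ-twisted cyclic shift of row i). Then the code C generated by G = [I_n | M] and its dual C^⊥ are monomially equivalent; in particular C is formally self-dual (C and C^⊥ have the same weight enumerator). -/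
open Function Matrix

section

variable {S : Type*} [CommRing S]

namespace Matrix

/-- The λ-circulant matrices of the paper. -/
def IsTwistedCirculant {n : ℕ} [NeZero n] (lam : S) (M : Matrix (Fin n) (Fin n) S) : Prop :=
  ∀ i j, M (i + 1) j = (if j = 0 then lam else 1) * M i (j - 1)

theorem IsTwistedCirculant.apply_eq {n : ℕ} [NeZero n] {lam : S} {M : Matrix (Fin n) (Fin n) S}
    (hM : M.IsTwistedCirculant lam) (i j : Fin n) :
    M i j = (if j < i then lam else 1) * M 0 (j - i) := by
  obtain ⟨m, rfl⟩ := Nat.exists_eq_succ_of_ne_zero (NeZero.ne n)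
  induction i using Fin.induction generalizing j with
  | zero => simp
  | succ i ih =>
    rw [← Fin.coeSucc_eq_succ, hM, ih, ← mul_assoc, sub_sub, add_comm 1]
    congr 1
    rcases eq_or_ne j 0 with rfl | hj
    · have hlast : ¬ (-1 : Fin (m + 1)) < i.castSucc := by
        rw [Fin.lt_def, Fin.coe_neg_one, Fin.val_castSucc]
        exact not_lt.2 i.is_lt.le
      simp [hlast, Fin.coeSucc_eq_succ, Fin.succ_pos]
    · have hshift : j - 1 < i.castSucc ↔ j < i.castSucc + 1 := by
        have hj' : j.val ≠ 0 := fun h => hj (Fin.ext h)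
        simp only [Fin.lt_def, Fin.coe_sub_one, if_neg hj, Fin.coeSucc_eq_succ, Fin.val_succ,
          Fin.val_castSucc]
        omega
      simp [hj, hshift]

theorem IsTwistedCirculant.isSymm_submatrix_rev {n : ℕ} [NeZero n] {lam : S}
    {M : Matrix (Fin n) (Fin n) S} (hM : M.IsTwistedCirculant lam) :
    (M.submatrix id Fin.rev).IsSymm := by
  obtain ⟨m, rfl⟩ := Nat.exists_eq_succ_of_ne_zero (NeZero.ne n)
  refine IsSymm.ext fun i k => ?_
  simp only [submatrix_apply, id, hM.apply_eq i, hM.apply_eq k, Fin.rev_lt_iff]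
  rw [← Fin.last_sub, ← Fin.last_sub, sub_right_comm]

end Matrix

def monomialMap {ι : Type*} (σ : Equiv.Perm ι) (ε : ι → S) (x : ι → S) : ι → S :=
  fun i => ε i * x (σ i)

theorem monomialMap_injective {ι : Type*} {σ : Equiv.Perm ι} {ε : ι → S}
    (hε : ∀ i, IsUnit (ε i)) : Injective (monomialMap σ ε) := by
  intro x y hxy
  funext i
  simpa [monomialMap, (hε (σ.symm i)).mul_right_inj] using congrFun hxy (σ.symm i)

section Fintype

variable {ι : Type*} [Fintype ι]

theorem mem_dualCode_span_range_iff {κ : Type*} (v : κ → ι → S) (x : ι → S) :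
    x ∈ dualCode (Submodule.span S (Set.range v)) ↔ ∀ k, x ⬝ᵥ v k = 0 := by
  refine ⟨fun hx k => hx _ (Submodule.subset_span ⟨k, rfl⟩), fun hx y hy => ?_⟩
  change x ⬝ᵥ y = 0
  induction hy using Submodule.span_induction with
  | mem y hy => obtain ⟨k, rfl⟩ := hy; exact hx k
  | zero => exact dotProduct_zero x
  | add y z _ _ hy hz => rw [dotProduct_add, hy, hz, add_zero]
  | smul c y _ hy => rw [dotProduct_smul, hy, smul_zero]

variable [DecidableEq S]

theorem hammingNorm_monomialMap {σ : Equiv.Perm ι} {ε : ι → S} (hε : ∀ i, IsUnit (ε i))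
    (x : ι → S) : hammingNorm (monomialMap σ ε x) = hammingNorm x := by
  unfold monomialMap
  rw [hammingNorm_comp (fun i y => ε i * y) (fun i => (hε i).mul_right_injective)
    (fun i => mul_zero _)]
  exact Finset.card_equiv σ (by simp)

theorem ncard_hammingNorm_eq_of_eq_image {f : (ι → S) → ι → S}
    (hf : Injective f) (hwt : ∀ x, hammingNorm (f x) = hammingNorm x) {C D : Set (ι → S)}
    (hD : D = f '' C) (w : ℕ) :
    {x | x ∈ C ∧ hammingNorm x = w}.ncard = {x | x ∈ D ∧ hammingNorm x = w}.ncard := by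
  rw [← Set.ncard_image_of_injective _ hf, hD]
  congr 1
  ext y
  constructor
  · rintro ⟨x, ⟨hx, hw⟩, rfl⟩
    exact ⟨⟨x, hx, rfl⟩, (hwt x).trans hw⟩
  · rintro ⟨⟨x, hx, rfl⟩, hw⟩
    exact ⟨x, ⟨hx, (hwt x).symm.trans hw⟩, rfl⟩

end Fintype

section Systematic

variable {n m : ℕ}

def systematicCode (M : Matrix (Fin n) (Fin m) S) : Submodule S (Fin (n + m) → S) :=
  Submodule.span S (Set.range fun i => Fin.append ((1 : Matrix (Fin n) (Fin n) S) i) (M i))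

theorem mem_systematicCode_iff {M : Matrix (Fin n) (Fin m) S} {x : Fin (n + m) → S} :
    x ∈ systematicCode M ↔ ∃ c, Fin.append c (c ᵥ* M) = x := by
  refine (Submodule.mem_span_range_iff_exists_fun S).trans (exists_congr fun c => ?_)
  suffices ∑ i, c i • Fin.append ((1 : Matrix (Fin n) (Fin n) S) i) (M i) =
      Fin.append c (c ᵥ* M) by rw [this]
  ext k
  induction k using Fin.addCases <;> simp [Finset.sum_apply, vecMul, dotProduct, one_apply]

theorem append_mem_dualCode_systematicCode_iff {M : Matrix (Fin n) (Fin m) S} (a : Fin n → S)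
    (b : Fin m → S) : Fin.append a b ∈ dualCode (systematicCode M) ↔ a + M *ᵥ b = 0 := by
  rw [systematicCode, mem_dualCode_span_range_iff, funext_iff]
  refine forall_congr' fun i => ?_
  simp [dotProduct, Fin.sum_univ_add, mulVec, one_apply, mul_comm]

theorem monomialMap_revPerm_append (a b : Fin n → S) :
    monomialMap Fin.revPerm (Fin.append (fun _ => -1) fun _ => 1) (Fin.append a b) =
      Fin.append (-(b ∘ Fin.rev)) (a ∘ Fin.rev) := by
  funext i
  simp only [monomialMap, Fin.revPerm_apply, Fin.append_rev, Fin.cast_eq_self]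
  induction i using Fin.addCases <;> simp [-Fin.natAdd_eq_addNat]

theorem vecMul_comp_rev {M : Matrix (Fin n) (Fin n) S} (hM : (M.submatrix id Fin.rev).IsSymm)
    (c : Fin n → S) : (c ᵥ* M) ∘ Fin.rev = M *ᵥ (c ∘ Fin.rev) := by
  funext i
  refine Fintype.sum_equiv Fin.revPerm _ _ fun k => ?_
  simpa [mul_comm] using congrArg (c k * ·) (hM.apply i k)

theorem dualCode_systematicCode_eq_image {M : Matrix (Fin n) (Fin n) S}
    (hM : (M.submatrix id Fin.rev).IsSymm) :
    (dualCode (systematicCode M) : Set (Fin (n + n) → S)) =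
      monomialMap Fin.revPerm (Fin.append (fun _ => -1) fun _ => 1) '' systematicCode M := by
  ext x
  constructor
  · intro hx
    obtain ⟨a, b, rfl⟩ : ∃ a b, Fin.append a b = x := ⟨_, _, Fin.append_castAdd_natAdd⟩
    have ha : a = -(M *ᵥ b) :=
      eq_neg_of_add_eq_zero_left ((append_mem_dualCode_systematicCode_iff a b).1 hx)
    refine ⟨_, mem_systematicCode_iff.2 ⟨b ∘ Fin.rev, rfl⟩, ?_⟩
    rw [monomialMap_revPerm_append, vecMul_comp_rev hM, ha]
    simp [Function.comp_def]
  · rintro ⟨_, hy, rfl⟩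
    obtain ⟨c, rfl⟩ := mem_systematicCode_iff.1 hy
    rw [SetLike.mem_coe, monomialMap_revPerm_append, append_mem_dualCode_systematicCode_iff,
      vecMul_comp_rev hM, neg_add_cancel]

end Systematic

end

theorem stmt_18_general (S : Type*) [CommRing S] [DecidableEq S]
    (n : ℕ) [NeZero n] (lam : S)
    (M : Matrix (Fin n) (Fin n) S)
    (hM : ∀ (i j : Fin n),
      M (i + 1) j = (if j = 0 then lam else 1) * M i (j - 1)) :
    let G : Fin n → (Fin (n + n) → S) :=
      fun i => Fin.append ((1 : Matrix (Fin n) (Fin n) S) i) (M i)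
    let C := Submodule.span S (Set.range G)
    (∃ (σ : Equiv.Perm (Fin (n + n))) (ε : Fin (n + n) → S),
      (∀ i, ε i = 1 ∨ ε i = -1) ∧
      ((dualCode C : Set (Fin (n + n) → S)) =
        (fun x : Fin (n + n) → S => fun i => ε i * x (σ i)) '' (C : Set (Fin (n + n) → S)))) ∧
    (∀ w : ℕ,
      Set.ncard {x : Fin (n + n) → S | x ∈ C ∧ hammingNorm x = w} =
        Set.ncard {x : Fin (n + n) → S | x ∈ dualCode C ∧ hammingNorm x = w}) := by
  intro G C
  set ε : Fin (n + n) → S := Fin.append (fun _ => -1) fun _ => 1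
  have hε : ∀ i, ε i = 1 ∨ ε i = -1 :=
    Fin.addCases (fun i => .inr (Fin.append_left _ _ i)) (fun j => .inl (Fin.append_right _ _ j))
  have hε_unit : ∀ i, IsUnit (ε i) := fun i =>
    (hε i).elim (fun h => h ▸ isUnit_one) (fun h => h ▸ isUnit_one.neg)
  have hdual : (dualCode C : Set (Fin (n + n) → S)) = monomialMap Fin.revPerm ε '' C :=
    dualCode_systematicCode_eq_image (IsTwistedCirculant.isSymm_submatrix_rev hM)
  exact ⟨⟨Fin.revPerm, ε, hε, hdual⟩, ncard_hammingNorm_eq_of_eq_image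
    (monomialMap_injective hε_unit) (hammingNorm_monomialMap hε_unit) hdual⟩

/-- Let `M` be an `n × n` `λ`-circulant matrix over a finite commutative ring `S`
(each row is the `λ`-twisted cyclic shift of the previous one, `λ` a unit). Then the
code `C` generated by `G = [Iₙ | M]` and its dual `C^⊥` are monomially equivalent
(via a coordinate permutation and multiplication of coordinates by `±1`); in
particular `C` is formally self-dual: `C` and `C^⊥` have the same Hamming weight
enumerator. -/
theorem stmt_18 (S : Type*) [CommRing S] [Fintype S] [DecidableEq S]
    (n : ℕ) [NeZero n] (lam : S) (hlam : IsUnit lam)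
    (M : Matrix (Fin n) (Fin n) S)
    (hM : ∀ (i j : Fin n),
      M (i + 1) j = (if j = 0 then lam else 1) * M i (j - 1)) :
    let G : Fin n → (Fin (n + n) → S) :=
      fun i => Fin.append ((1 : Matrix (Fin n) (Fin n) S) i) (M i)
    let C := Submodule.span S (Set.range G)
    (∃ (σ : Equiv.Perm (Fin (n + n))) (ε : Fin (n + n) → S),
      (∀ i, ε i = 1 ∨ ε i = -1) ∧
      ((dualCode C : Set (Fin (n + n) → S)) =
        (fun x : Fin (n + n) → S => fun i => ε i * x (σ i)) '' (C : Set (Fin (n + n) → S)))) ∧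
    (∀ w : ℕ,
      Set.ncard {x : Fin (n + n) → S | x ∈ C ∧ hammingNorm x = w} =
        Set.ncard {x : Fin (n + n) → S | x ∈ dualCode C ∧ hammingNorm x = w}) :=
  stmt_18_general S n lam M hM
end
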